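/- arXiv:1906.06861 — 4 statements merged into one kernel-verified Lean document; each statement's English description precedes it below -/
import Mathlib

section
/- Let (f_{(a,b)})_{0≤a<b≤n+2} be the canonical basis of ℝ^{(n+3 choose 2)}. For 0 ≤ a < a' < b < b' ≤ n+2 define n(a,b,a',b') = f_{(a,b)} + f_{(a',b')} − f_{(a,b')} − f_{(a',b)}, and for 1 ≤ c < d−2 ≤ n+1 (i.e. c+2 ≤ d) define m(c,d) = f_{(c,d−1)} + f_{(c+1,d)} − f_{(c,d)} − f_{(c+1,d−1)}. Then n(a,b,a',b') = Σ_{c ∈ [a,a'), d ∈ (b,b']} m(c,d), where the sum ranges over integers c with a ≤ c < a' and integers d with b < d ≤ b'. -/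
/-- Standard basis vector `f_{(a,b)}` of the real vector space with coordinates indexed by
pairs of integers. -/
def fbas (p : ℤ × ℤ) : (ℤ × ℤ) → ℝ := fun q => if q = p then 1 else 0

/-- `n(a,b,a',b') = f_{(a,b)} + f_{(a',b')} − f_{(a,b')} − f_{(a',b)}`. -/
def nvec (a b a' b' : ℤ) : (ℤ × ℤ) → ℝ :=
  fbas (a, b) + fbas (a', b') - fbas (a, b') - fbas (a', b)

/-- `m(c,d) = f_{(c,d−1)} + f_{(c+1,d)} − f_{(c,d)} − f_{(c+1,d−1)}`. -/
def mvec (c d : ℤ) : (ℤ × ℤ) → ℝ :=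
  fbas (c, d - 1) + fbas (c + 1, d) - fbas (c, d) - fbas (c + 1, d - 1)

lemma teleIco (g : ℤ → ((ℤ × ℤ) → ℝ)) (a b : ℤ) (hab : a ≤ b) :
    ∑ c ∈ Finset.Ico a b, (g c - g (c + 1)) = g a - g b := by
  refine Int.le_induction (motive := fun t _ => ∑ c ∈ Finset.Ico a t, (g c - g (c + 1)) = g a - g t) ?_ ?_ b hab
  · simp
  · intro b hb ih
    have h : Finset.Ico a (b + 1) = insert b (Finset.Ico a b) := by
      ext x; simp only [Finset.mem_Ico, Finset.mem_insert]; omega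
    rw [h, Finset.sum_insert (by simp), ih]
    abel

lemma teleIoc (g : ℤ → ((ℤ × ℤ) → ℝ)) (a b : ℤ) (hab : a ≤ b) :
    ∑ d ∈ Finset.Ioc a b, (g (d - 1) - g d) = g a - g b := by
  refine Int.le_induction (motive := fun t _ => ∑ d ∈ Finset.Ioc a t, (g (d - 1) - g d) = g a - g t) ?_ ?_ b hab
  · simp
  · intro b hb ih
    have h : Finset.Ioc a (b + 1) = insert (b + 1) (Finset.Ioc a b) := by
      ext x; simp only [Finset.mem_Ioc, Finset.mem_insert]; omega
    rw [h, Finset.sum_insert (by simp), ih]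
    simp only [add_sub_cancel_right]
    abel

/-- For `0 ≤ a < a' < b < b' ≤ n+2`,
`n(a,b,a',b') = Σ_{a ≤ c < a'} Σ_{b < d ≤ b'} m(c,d)`. -/
theorem stmt3 (n a a' b b' : ℤ) (h0 : 0 ≤ a) (h1 : a < a') (h2 : a' < b) (h3 : b < b')
    (h4 : b' ≤ n + 2) :
    nvec a b a' b' = ∑ c ∈ Finset.Ico a a', ∑ d ∈ Finset.Ioc b b', mvec c d := by
  have inner : ∀ c : ℤ, ∑ d ∈ Finset.Ioc b b', mvec c d
      = (fun e => fbas (c, e) - fbas (c + 1, e)) b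
        - (fun e => fbas (c, e) - fbas (c + 1, e)) b' := by
    intro c
    rw [← teleIoc (fun e => fbas (c, e) - fbas (c + 1, e)) b b' h3.le]
    apply Finset.sum_congr rfl
    intro d _
    simp only [mvec]
    abel
  calc nvec a b a' b'
      = (fun c => fbas (c, b) - fbas (c, b')) a
        - (fun c => fbas (c, b) - fbas (c, b')) a' := by simp [nvec]; abel
    _ = ∑ c ∈ Finset.Ico a a',
          ((fun c => fbas (c, b) - fbas (c, b')) c
            - (fun c => fbas (c, b) - fbas (c, b')) (c + 1)) := by
        rw [teleIco (fun c => fbas (c, b) - fbas (c, b')) a a' h1.le]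
    _ = ∑ c ∈ Finset.Ico a a', ∑ d ∈ Finset.Ioc b b', mvec c d := by
        apply Finset.sum_congr rfl
        intro c _
        rw [inner c]
        exact sub_sub_sub_comm _ _ _ _
end

section
/- Let C be a 2-Calabi–Yau Hom-finite Krull–Schmidt triangulated category with cluster-tilting object T, let X → E → Σ^{-1}X →^h ΣX be an almost-split triangle with X indecomposable. Then X ∉ add(ΣT) if and only if h factors through add(ΣT). -/
open CategoryTheory CategoryTheory.Limits CategoryTheory.Pretriangulated

universe v u

variable {K : Type*} [Field K]
variable {C : Type u} [Category.{v} C] [Preadditive C] [CategoryTheory.Linear K C]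
  [HasZeroObject C] [HasShift C ℤ] [∀ n : ℤ, (CategoryTheory.shiftFunctor C n).Additive]
  [Pretriangulated C] [HasFiniteBiproducts C]

/-- Indecomposable object: nonzero and with no nontrivial direct sum decomposition. -/
def Indec (X : C) : Prop :=
  ¬ Limits.IsZero X ∧ ∀ (Y Z : C), Nonempty (X ≅ Y ⊞ Z) → Limits.IsZero Y ∨ Limits.IsZero Z

/-- `X` belongs to the additive closure `add T`: it is a direct summand of a finite direct
sum of copies of `T`. -/
def InAdd (T X : C) : Prop :=
  ∃ (k : ℕ) (s : X ⟶ ⨁ (fun _ : Fin k => T)) (r : (⨁ (fun _ : Fin k => T)) ⟶ X),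
    s ≫ r = 𝟙 X

/-- A morphism factors through the additive closure `add T`. -/
def FactorsAdd (T : C) {A B : C} (h : A ⟶ B) : Prop :=
  ∃ (W : C) (u : A ⟶ W) (v : W ⟶ B), InAdd T W ∧ u ≫ v = h

/-- A triangle `X →f E →g Z →h ΣX` is almost-split: it is distinguished, `X` and `Z` are
indecomposable, `h ≠ 0`, and every non-section `X ⟶ X'` factors through `f`. -/
def AlmostSplitTriangle {X E Z : C} (f : X ⟶ E) (g : E ⟶ Z)
    (h : Z ⟶ (shiftFunctor C (1 : ℤ)).obj X) : Prop :=
  (Triangle.mk f g h ∈ distTriang C) ∧ Indec X ∧ Indec Z ∧ h ≠ 0 ∧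
    ∀ (X' : C) (u : X ⟶ X'), (¬ ∃ r : X' ⟶ X, u ≫ r = 𝟙 X) → ∃ w : E ⟶ X', f ≫ w = u

section Aux

set_option linter.unusedSectionVars false

lemma inAdd_self' (T : C) : InAdd T T :=
  ⟨1, biproduct.lift (fun _ => 𝟙 T), biproduct.π _ 0, by simp⟩

lemma inAdd_of_iso' {T X Y : C} (hX : InAdd T X) (e : X ≅ Y) : InAdd T Y := by
  obtain ⟨k, s, r, hsr⟩ := hX
  exact ⟨k, e.inv ≫ s, r ≫ e.hom, by simp [reassoc_of% hsr]⟩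

lemma inAdd_shift' {T Y : C} (hY : InAdd T Y) :
    InAdd ((shiftFunctor C (1 : ℤ)).obj T) ((shiftFunctor C (1 : ℤ)).obj Y) := by
  obtain ⟨k, s, r, hsr⟩ := hY
  let F := shiftFunctor C (1 : ℤ)
  let e := F.mapBiproduct (fun _ : Fin k => T)
  refine ⟨k, F.map s ≫ e.hom, e.inv ≫ F.map r, ?_⟩
  simp only [Category.assoc, Iso.hom_inv_id_assoc, ← F.map_comp, hsr, F.map_id]
  rfl

lemma sect_isIso' {X : C} (hL : IsLocalRing (End X)) {φ ρ : X ⟶ X} (hφ : φ ≫ ρ = 𝟙 X) :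
    IsIso φ := by
  set a : End X := φ with ha
  set b : End X := ρ with hb
  have hρφ : b * a = 1 := hφ
  have he : (a * b) * (a * b) = a * b := by
    rw [mul_assoc, ← mul_assoc b a, hρφ, one_mul]
  rcases hL.isUnit_or_isUnit_of_add_one (a := a * b) (b := 1 - a * b)
      (by rw [add_sub_cancel]) with hu | hu
  · have h1 : a * b = 1 := (hu.mul_left_cancel (by rw [he, mul_one])).symm
    exact ⟨ρ, hφ, h1⟩
  · have h0 : (1 - a * b) * a = (1 - a * b) * 0 := by
      rw [mul_zero, sub_mul, one_mul, mul_assoc, hρφ, mul_one, sub_self]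
    have hφ0 : a = 0 := hu.mul_left_cancel h0
    have h01 : (1 : End X) = 0 := by rw [← hρφ, hφ0, mul_zero]
    refine ⟨ρ, hφ, ?_⟩
    show a * b = 1
    rw [hφ0, zero_mul, h01]

end Aux

/-- Let `C` be a 2-Calabi–Yau Hom-finite Krull–Schmidt triangulated
category with cluster-tilting object `T`, and let `X → E → Σ⁻¹X →h ΣX` be an almost-split
triangle with `X` indecomposable. Then `X ∉ add(ΣT)` if and only if `h` factors through
`add(ΣT)`. -/
theorem stmt9
    (homfin : ∀ X Y : C, FiniteDimensional K (X ⟶ Y))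
    (hKS : ∀ X : C, Indec X → IsLocalRing (End X))
    -- 2-Calabi–Yau duality, bifunctorially
    (D : ∀ X Y : C, (X ⟶ (shiftFunctor C (1 : ℤ)).obj Y) ≃ₗ[K]
        ((Y ⟶ (shiftFunctor C (1 : ℤ)).obj X) →ₗ[K] K))
    (hD₁ : ∀ (X X' Y : C) (f : X' ⟶ X) (m : X ⟶ (shiftFunctor C (1 : ℤ)).obj Y)
        (u : Y ⟶ (shiftFunctor C (1 : ℤ)).obj X'),
        D X' Y (f ≫ m) u = D X Y m (u ≫ (shiftFunctor C (1 : ℤ)).map f))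
    (hD₂ : ∀ (X Y Y' : C) (g : Y ⟶ Y') (m : X ⟶ (shiftFunctor C (1 : ℤ)).obj Y)
        (u : Y' ⟶ (shiftFunctor C (1 : ℤ)).obj X),
        D X Y' (m ≫ (shiftFunctor C (1 : ℤ)).map g) u = D X Y m (g ≫ u))
    -- `T` is a cluster-tilting object
    (T : C) (hT : ∀ X : C, (∀ f : T ⟶ (shiftFunctor C (1 : ℤ)).obj X, f = 0) ↔ InAdd T X)
    -- the almost-split triangle `X → E → Σ⁻¹X → ΣX`
    (X E : C) (f : X ⟶ E) (g : E ⟶ (shiftFunctor C (-1 : ℤ)).obj X)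
    (h : (shiftFunctor C (-1 : ℤ)).obj X ⟶ (shiftFunctor C (1 : ℤ)).obj X)
    (hAS : AlmostSplitTriangle f g h) :
    ¬ InAdd ((shiftFunctor C (1 : ℤ)).obj T) X
      ↔ FactorsAdd ((shiftFunctor C (1 : ℤ)).obj T) h := by
  obtain ⟨hTri, hIndX, hIndZ, hne, hASprop⟩ := hAS
  have hTT : ∀ q : T ⟶ (shiftFunctor C (1 : ℤ)).obj T, q = 0 := (hT T).mpr (inAdd_self' T)
  -- any morphism from add (ΣT) to ΣX is zero, when X ∈ add (ΣT)
  have key0 : InAdd ((shiftFunctor C (1 : ℤ)).obj T) X → ∀ (W : C), InAdd ((shiftFunctor C (1 : ℤ)).obj T) W →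
      ∀ v : W ⟶ (shiftFunctor C (1 : ℤ)).obj X, v = 0 := by
    intro hX W hW v
    have hψ : ∀ ψ : T ⟶ X, ψ = 0 := by
      intro ψ
      obtain ⟨k, s, r, hsr⟩ := hX
      have hψs : ψ ≫ s = 0 := by
        apply biproduct.hom_ext
        intro j
        rw [Category.assoc, zero_comp]
        exact hTT _
      calc ψ = ψ ≫ 𝟙 X := by rw [Category.comp_id]
      _ = ψ ≫ s ≫ r := by rw [hsr]
      _ = (ψ ≫ s) ≫ r := by rw [Category.assoc]
      _ = 0 := by rw [hψs, zero_comp]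
    have hφ : ∀ φ : (shiftFunctor C (1 : ℤ)).obj T ⟶ (shiftFunctor C (1 : ℤ)).obj X, φ = 0 := by
      intro φ
      obtain ⟨ψ, hψ'⟩ := (shiftFunctor C (1 : ℤ)).map_surjective φ
      rw [← hψ', hψ ψ, (shiftFunctor C (1 : ℤ)).map_zero]
    obtain ⟨k, s, r, hsr⟩ := hW
    have hrv : r ≫ v = 0 := by
      apply biproduct.hom_ext'
      intro j
      rw [comp_zero, ← Category.assoc]
      exact hφ _
    calc v = 𝟙 W ≫ v := by rw [Category.id_comp]
    _ = (s ≫ r) ≫ v := by rw [hsr]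
    _ = s ≫ r ≫ v := by rw [Category.assoc]
    _ = 0 := by rw [hrv, comp_zero]
  constructor
  · -- hard direction
    intro hnX
    have hLoc : IsLocalRing (End X) := hKS X hIndX
    -- the iso e : Σ(Σ⁻¹ X) ≅ X
    let e : (shiftFunctor C (1 : ℤ)).obj ((shiftFunctor C (-1 : ℤ)).obj X) ≅ X :=
      (shiftEquiv C (1 : ℤ)).counitIso.app X
    -- X ∉ add(ΣT) means Σ⁻¹X ∉ add T
    have hn1 : ¬ InAdd T ((shiftFunctor C (-1 : ℤ)).obj X) := by
      intro hx
      exact hnX (inAdd_of_iso' (inAdd_shift' hx) e)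
    -- hence some nonzero map T → Σ(Σ⁻¹X)
    have hp : ∃ p : T ⟶ (shiftFunctor C (1 : ℤ)).obj ((shiftFunctor C (-1 : ℤ)).obj X), p ≠ 0 := by
      by_contra hc
      push_neg at hc
      exact hn1 ((hT _).mp hc)
    -- hence some nonzero map Σ⁻¹X → ΣT (by duality)
    obtain ⟨a, ha⟩ : ∃ a : (shiftFunctor C (-1 : ℤ)).obj X ⟶ (shiftFunctor C (1 : ℤ)).obj T, a ≠ 0 := by
      by_contra hc
      push_neg at hc
      obtain ⟨p, hp0⟩ := hp
      apply hp0
      have : D T _ p = 0 := by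
        apply LinearMap.ext
        intro q
        rw [hc q, map_zero, LinearMap.zero_apply]
      calc p = (D T _).symm (D T _ p) := ((D T _).symm_apply_apply p).symm
      _ = (D T _).symm 0 := by rw [this]
      _ = 0 := map_zero _
    -- build a triangle on a and inv-rotate it
    obtain ⟨Z', b, c, hZ⟩ := Pretriangulated.distinguished_cocone_triangle a
    have hT₂ : (Triangle.mk a b c).invRotate ∈ distTriang C :=
      inv_rot_of_distTriang _ hZ
    set k : (Triangle.mk a b c).invRotate.obj₁ ⟶ (shiftFunctor C (-1 : ℤ)).obj X :=
      (Triangle.mk a b c).invRotate.mor₁ with hk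
    have hka : k ≫ a = 0 := comp_distTriang_mor_zero₁₂ _ hT₂
    -- k is not a split epi
    have hnsplit : ¬ ∃ s : (shiftFunctor C (-1 : ℤ)).obj X ⟶ _, s ≫ k = 𝟙 _ := by
      rintro ⟨s, hs⟩
      apply ha
      calc a = 𝟙 _ ≫ a := by rw [Category.id_comp]
      _ = (s ≫ k) ≫ a := by rw [hs]
      _ = s ≫ k ≫ a := by rw [Category.assoc]
      _ = 0 := by rw [hka, comp_zero]
    -- D(h) vanishes on all u' with u' ≫ e.hom not an iso
    have hvan : ∀ u' : X ⟶ (shiftFunctor C (1 : ℤ)).obj ((shiftFunctor C (-1 : ℤ)).obj X),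
        ¬ IsIso (u' ≫ e.hom) → D _ X h u' = 0 := by
      intro u' hniso
      have hnsec : ¬ ∃ r : X ⟶ X, (u' ≫ e.hom) ≫ r = 𝟙 X := by
        rintro ⟨r, hr⟩
        exact hniso (sect_isIso' hLoc hr)
      obtain ⟨w, hw⟩ := hASprop X (u' ≫ e.hom) hnsec
      have hu' : u' = f ≫ (w ≫ e.inv) := by
        rw [← Category.assoc, hw, Category.assoc, e.hom_inv_id, Category.comp_id]
      rw [hu', ← hD₂ _ X E f h (w ≫ e.inv)]
      have hzero : h ≫ (shiftFunctor C (1 : ℤ)).map f = 0 := comp_distTriang_mor_zero₃₁ _ hTri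
      rw [hzero, map_zero, LinearMap.zero_apply]
    -- k ≫ h = 0
    have hkh : k ≫ h = 0 := by
      apply (D _ X).injective
      rw [map_zero]
      apply LinearMap.ext
      intro u
      rw [LinearMap.zero_apply, hD₁ _ _ X k h u]
      apply hvan
      intro hiso
      apply hnsplit
      obtain ⟨s, hs⟩ := (shiftFunctor C (1 : ℤ)).map_surjective (e.hom ≫ u)
      haveI := hiso
      have hmap : (shiftFunctor C (1 : ℤ)).map (s ≫ k)
          = e.hom ≫ (((u ≫ (shiftFunctor C (1 : ℤ)).map k) ≫ e.hom) ≫ e.inv) := by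
        rw [(shiftFunctor C (1 : ℤ)).map_comp, hs]
        simp only [Category.assoc, e.hom_inv_id, Category.comp_id]
      have : IsIso ((shiftFunctor C (1 : ℤ)).map (s ≫ k)) := by
        rw [hmap]
        infer_instance
      have hsk : IsIso (s ≫ k) := isIso_of_reflects_iso (s ≫ k) (shiftFunctor C (1 : ℤ))
      exact ⟨inv (s ≫ k) ≫ s, by rw [Category.assoc, IsIso.inv_hom_id]⟩
    -- h factors through a
    obtain ⟨v, hv⟩ := Triangle.yoneda_exact₂ _ hT₂ h hkh
    refine ⟨(shiftFunctor C (1 : ℤ)).obj T, a, v, inAdd_self' _, ?_⟩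
    exact hv.symm
  · -- easy direction
    rintro ⟨W, u, v, hW, huv⟩ hX
    apply hne
    rw [← huv, key0 hX W hW v, comp_zero]
end

section
/- Let C be an extriangulated category and T a full additive subcategory of projective objects such that every X ∈ C admits a conflation T_1 ↣ T_0 ↠ X with T_0, T_1 ∈ T. Then the index ind_T(X) := [T_0] − [T_1] ∈ K_0(T) is well-defined: any two such conflations T_1 ↣ T_0 ↠ X and T'_1 ↣ T'_0 ↠ X satisfy [T_0] − [T_1] = [T'_0] − [T'_1] in K_0(T); indeed T'_1 ⊕ T_0 ≅ T_1 ⊕ T'_0. -/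
open CategoryTheory CategoryTheory.Limits

attribute [local instance] CategoryTheory.Limits.hasBinaryBiproducts_of_finite_biproducts

universe v u

variable {C : Type u} [Category.{v} C] [Preadditive C] [HasZeroObject C]
  [HasFiniteBiproducts C]

/-- The data of an extriangulated structure on an additive category `C`, recorded through
its class of conflations `X ↣ Y ↠ Z` together with the axioms (consequences of the
Nakaoka–Palu axioms (ET1)–(ET4)) used here: conflations compose to zero, split sequences
are conflations, a conflation whose deflation admits a section is split, and the
pullback axiom [NP19, Prop. 3.15]: two conflations with the same third term fit in a
commutative diagram over a common object `W`. -/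
structure ExtriangulatedStructure (C : Type u) [Category.{v} C] [Preadditive C]
    [HasZeroObject C] [HasFiniteBiproducts C] where
  IsConflation : ∀ ⦃X Y Z : C⦄, (X ⟶ Y) → (Y ⟶ Z) → Prop
  comp_eq_zero : ∀ {X Y Z : C} (f : X ⟶ Y) (g : Y ⟶ Z), IsConflation f g → f ≫ g = 0
  split_conflation : ∀ X Z : C,
    IsConflation (biprod.inl : X ⟶ X ⊞ Z) (biprod.snd : X ⊞ Z ⟶ Z)
  splits_of_section : ∀ {X Y Z : C} (f : X ⟶ Y) (g : Y ⟶ Z), IsConflation f g →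
    ∀ s : Z ⟶ Y, s ≫ g = 𝟙 Z →
      ∃ e : Y ≅ X ⊞ Z, f ≫ e.hom = biprod.inl ∧ e.hom ≫ biprod.snd = g
  pullback_pair : ∀ {X Y Z X' Y' : C} (f : X ⟶ Y) (g : Y ⟶ Z) (f' : X' ⟶ Y')
    (g' : Y' ⟶ Z), IsConflation f g → IsConflation f' g' →
      ∃ (W : C) (p : W ⟶ Y) (p' : W ⟶ Y') (i : X ⟶ W) (i' : X' ⟶ W),
        IsConflation i' p ∧ IsConflation i p' ∧ p ≫ g = p' ≫ g' ∧
          i ≫ p = f ∧ i' ≫ p' = f'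

/-- `P` is projective: every deflation lifts against `P`. -/
def IsProj (E : ExtriangulatedStructure C) (P : C) : Prop :=
  ∀ {Y Z : C} (g : Y ⟶ Z), (∃ (X : C) (f : X ⟶ Y), E.IsConflation f g) →
    ∀ h : P ⟶ Z, ∃ l : P ⟶ Y, l ≫ g = h

variable (T : Set C)

/-- The split Grothendieck group `K₀(T)` of a full additive subcategory `T ⊆ C`: the free
abelian group on the objects of `T`, modulo identifying isomorphic objects and setting
`[Y ⊕ Z] = [Y] + [Z]`. -/
def K0T : Type u :=
  (FreeAbelianGroup {X : C // X ∈ T}) ⧸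
    (Submodule.span ℤ
      ({x : FreeAbelianGroup {X : C // X ∈ T} |
          ∃ (Y Z : {X : C // X ∈ T}) (h : ((Y : C) ⊞ (Z : C)) ∈ T),
            x = FreeAbelianGroup.of ⟨(Y : C) ⊞ (Z : C), h⟩
              - FreeAbelianGroup.of Y - FreeAbelianGroup.of Z} ∪
        {x | ∃ Y Z : {X : C // X ∈ T}, Nonempty ((Y : C) ≅ (Z : C)) ∧
            x = FreeAbelianGroup.of Y - FreeAbelianGroup.of Z}))

noncomputable instance : AddCommGroup (K0T T) :=
  inferInstanceAs (AddCommGroup ((FreeAbelianGroup _) ⧸ _))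

/-- The class of an object of `T` in `K₀(T)`. -/
def clsT (X : C) (hX : X ∈ T) : K0T T :=
  Submodule.Quotient.mk (FreeAbelianGroup.of ⟨X, hX⟩)

/-- Let `C` be an extriangulated category and `T` a full additive
subcategory of projective objects such that every `X ∈ C` admits a conflation
`T₁ ↣ T₀ ↠ X` with `T₀, T₁ ∈ T`. Then the index `ind_T(X) = [T₀] − [T₁] ∈ K₀(T)` is
well-defined: two such conflations `T₁ ↣ T₀ ↠ X` and `T₁' ↣ T₀' ↠ X` satisfy
`[T₀] − [T₁] = [T₀'] − [T₁']` in `K₀(T)`; indeed `T₁' ⊕ T₀ ≅ T₁ ⊕ T₀'`. -/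
theorem clsT_biprod (Y Z : C) (hY : Y ∈ T) (hZ : Z ∈ T) (h : (Y ⊞ Z) ∈ T) :
    clsT T (Y ⊞ Z) h = clsT T Y hY + clsT T Z hZ := by
  unfold clsT
  refine (Submodule.Quotient.eq _ (x := FreeAbelianGroup.of (⟨Y ⊞ Z, h⟩ : {X : C // X ∈ T}))
    (y := FreeAbelianGroup.of (⟨Y, hY⟩ : {X : C // X ∈ T}) + FreeAbelianGroup.of (⟨Z, hZ⟩ : {X : C // X ∈ T}))).mpr ?_
  apply Submodule.subset_span
  left
  exact ⟨⟨Y, hY⟩, ⟨Z, hZ⟩, h, by abel⟩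

theorem clsT_iso (Y Z : C) (hY : Y ∈ T) (hZ : Z ∈ T) (e : Y ≅ Z) :
    clsT T Y hY = clsT T Z hZ := by
  unfold clsT
  refine (Submodule.Quotient.eq _ (x := FreeAbelianGroup.of (⟨Y, hY⟩ : {X : C // X ∈ T}))
    (y := FreeAbelianGroup.of (⟨Z, hZ⟩ : {X : C // X ∈ T}))).mpr ?_
  apply Submodule.subset_span
  right
  exact ⟨⟨Y, hY⟩, ⟨Z, hZ⟩, ⟨e⟩, rfl⟩

theorem stmt14' (E : ExtriangulatedStructure C)
    (hiso : ∀ X Y : C, X ∈ T → Nonempty (X ≅ Y) → Y ∈ T)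
    (hadd : ∀ Y ∈ T, ∀ Z ∈ T, (Y ⊞ Z) ∈ T)
    (hproj : ∀ P ∈ T, IsProj E P)
    (X T₁ T₀ T₁' T₀' : C)
    (h₁ : T₁ ∈ T) (h₀ : T₀ ∈ T) (h₁' : T₁' ∈ T) (h₀' : T₀' ∈ T)
    (f : T₁ ⟶ T₀) (g : T₀ ⟶ X) (hfg : E.IsConflation f g)
    (f' : T₁' ⟶ T₀') (g' : T₀' ⟶ X) (hfg' : E.IsConflation f' g') :
    Nonempty (T₁' ⊞ T₀ ≅ T₁ ⊞ T₀') ∧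
      clsT T T₀ h₀ - clsT T T₁ h₁ = clsT T T₀' h₀' - clsT T T₁' h₁' := by
  obtain ⟨W, p, p', i, i', hc1, hc2, _, _, _⟩ :=
    E.pullback_pair f g f' g' hfg hfg'
  -- W ≅ T₁' ⊞ T₀
  obtain ⟨s, hs⟩ := hproj T₀ h₀ p ⟨_, _, hc1⟩ (𝟙 T₀)
  obtain ⟨e₁, _, _⟩ := E.splits_of_section i' p hc1 s hs
  -- W ≅ T₁ ⊞ T₀'
  obtain ⟨s', hs'⟩ := hproj T₀' h₀' p' ⟨_, _, hc2⟩ (𝟙 T₀')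
  obtain ⟨e₂, _, _⟩ := E.splits_of_section i p' hc2 s' hs'
  have eIso : T₁' ⊞ T₀ ≅ T₁ ⊞ T₀' := e₁.symm.trans e₂
  refine ⟨⟨eIso⟩, ?_⟩
  have h1 := clsT_biprod T T₁' T₀ h₁' h₀ (hadd _ h₁' _ h₀)
  have h2 := clsT_biprod T T₁ T₀' h₁ h₀' (hadd _ h₁ _ h₀')
  have h3 := clsT_iso T _ _ (hadd _ h₁' _ h₀) (hadd _ h₁ _ h₀') eIso
  rw [h1, h2] at h3
  linear_combination (norm := abel) h3

/-- placeholder docstring to keep structure -/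
theorem stmt14 (E : ExtriangulatedStructure C)
    -- `T` is a full additive subcategory (closed under isomorphisms and direct sums)
    (hiso : ∀ X Y : C, X ∈ T → Nonempty (X ≅ Y) → Y ∈ T)
    (hadd : ∀ Y ∈ T, ∀ Z ∈ T, (Y ⊞ Z) ∈ T)
    -- consisting of projective objects
    (hproj : ∀ P ∈ T, IsProj E P)
    -- and every object of `C` admits a `T`-presentation
    (hres : ∀ X : C, ∃ (T₁ T₀ : C) (f : T₁ ⟶ T₀) (g : T₀ ⟶ X),
      T₁ ∈ T ∧ T₀ ∈ T ∧ E.IsConflation f g)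
    -- two conflations presenting the same object `X`
    (X T₁ T₀ T₁' T₀' : C)
    (h₁ : T₁ ∈ T) (h₀ : T₀ ∈ T) (h₁' : T₁' ∈ T) (h₀' : T₀' ∈ T)
    (f : T₁ ⟶ T₀) (g : T₀ ⟶ X) (hfg : E.IsConflation f g)
    (f' : T₁' ⟶ T₀') (g' : T₀' ⟶ X) (hfg' : E.IsConflation f' g') :
    Nonempty (T₁' ⊞ T₀ ≅ T₁ ⊞ T₀') ∧
      clsT T T₀ h₀ - clsT T T₁ h₁ = clsT T T₀' h₀' - clsT T T₁' h₁' := by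
  exact stmt14' T E hiso hadd hproj X T₁ T₀ T₁' T₀' h₁ h₀ h₁' h₀' f g hfg f' g' hfg'
end

section
/- For the star graph on n vertices (one center c and n−1 leaves), the number Σ_{s tube, |s|≥2} (nd(s) choose 2) equals (n−1) + 2^{n−3}·((n−1) choose 2), where nd(s) is the number of non-disconnecting vertices of the tube s. -/
open SimpleGraph

/-- The star graph on `n` vertices: the center is `0 : Fin n` and all other vertices are
leaves adjacent exactly to the center. -/
def starGraph (n : ℕ) [NeZero n] : SimpleGraph (Fin n) :=
  SimpleGraph.fromRel (fun x _ => x = 0)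

/-- The tubes of a graph `G` on vertex set `Fin n`: nonempty vertex subsets inducing a
connected subgraph. -/
def IsTube {n : ℕ} (G : SimpleGraph (Fin n)) (s : Finset (Fin n)) : Prop :=
  s.Nonempty ∧ (G.induce (s : Set (Fin n))).Connected

/-- The number of non-disconnecting vertices of a tube `s`: vertices `v ∈ s` such that
`s \ {v}` still induces a connected subgraph. -/
noncomputable def nd {n : ℕ} (G : SimpleGraph (Fin n)) (s : Finset (Fin n)) : ℕ :=
  letI := Classical.dec
  (s.filter (fun v => (G.induce ((s.erase v : Finset (Fin n)) : Set (Fin n))).Connected)).card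

section Aux

variable {n : ℕ} [NeZero n]

lemma star_adj {x y : Fin n} : (_root_.starGraph n).Adj x y ↔ x ≠ y ∧ (x = 0 ∨ y = 0) := by
  simp [_root_.starGraph]

lemma star_induce_connected_of_zero_mem {A : Set (Fin n)} (h0 : (0 : Fin n) ∈ A) :
    ((_root_.starGraph n).induce A).Connected := by
  have key : ∀ a : A, ((_root_.starGraph n).induce A).Reachable a ⟨0, h0⟩ := by
    intro a
    by_cases h : (a : Fin n) = 0
    · exact (Subtype.ext h : a = ⟨0, h0⟩) ▸ Reachable.refl a
    · refine Adj.reachable ?_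
      show (_root_.starGraph n).Adj a 0
      exact star_adj.mpr ⟨by simpa using h, Or.inr rfl⟩
  haveI : Nonempty A := ⟨⟨0, h0⟩⟩
  exact ⟨fun a b => (key a).trans (key b).symm⟩

lemma star_induce_bot {A : Set (Fin n)} (h0 : (0 : Fin n) ∉ A) :
    (_root_.starGraph n).induce A = ⊥ := by
  ext a b
  simp only [bot_adj, iff_false]
  intro h
  have h' : (_root_.starGraph n).Adj a b := h
  rcases (star_adj.mp h').2 with h1 | h1
  · exact h0 (h1 ▸ a.2)
  · exact h0 (h1 ▸ b.2)

lemma star_induce_finset_connected_iff {s : Finset (Fin n)} :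
    ((_root_.starGraph n).induce (s : Set (Fin n))).Connected ↔
      s.Nonempty ∧ (s.card = 1 ∨ (0 : Fin n) ∈ s) := by
  constructor
  · intro h
    have hne : s.Nonempty := by
      obtain ⟨⟨a, ha⟩⟩ := h.nonempty
      exact ⟨a, by simpa using ha⟩
    refine ⟨hne, ?_⟩
    by_cases h0 : (0 : Fin n) ∈ s
    · exact Or.inr h0
    · left
      have hbot : (_root_.starGraph n).induce (s : Set (Fin n)) = ⊥ :=
        star_induce_bot (by simpa using h0)
      rw [hbot] at h
      have hsub : Subsingleton (s : Set (Fin n)) :=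
        preconnected_bot_iff_subsingleton.mp h.preconnected
      obtain ⟨a, ha⟩ := hne
      refine Finset.card_eq_one.mpr ⟨a, ?_⟩
      ext b
      simp only [Finset.mem_singleton]
      constructor
      · intro hb
        exact Subtype.ext_iff.mp (hsub.elim ⟨b, by simpa using hb⟩ ⟨a, by simpa using ha⟩)
      · rintro rfl; exact ha
  · rintro ⟨hne, h1 | h0⟩
    · obtain ⟨a, ha⟩ := Finset.card_eq_one.mp h1
      subst ha
      haveI : Subsingleton ((({a} : Finset (Fin n)) : Set (Fin n)) : Set (Fin n)).Elem := by
        rw [Finset.coe_singleton]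
        infer_instance
      haveI : Nonempty ((({a} : Finset (Fin n)) : Set (Fin n)) : Set (Fin n)).Elem :=
        ⟨⟨a, by simp⟩⟩
      exact ⟨fun x y => by rw [Subsingleton.elim x y]⟩
    · exact star_induce_connected_of_zero_mem (by simpa using h0)

lemma nd_eq {m : ℕ} (G : SimpleGraph (Fin m)) (s : Finset (Fin m))
    [DecidablePred fun v => (G.induce ((s.erase v : Finset (Fin m)) : Set (Fin m))).Connected] :
    nd G s = (s.filter
      (fun v => (G.induce ((s.erase v : Finset (Fin m)) : Set (Fin m))).Connected)).card := by
  unfold nd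
  have h1 : (fun (a b : Fin m) => Classical.dec (a = b)) = instDecidableEqFin m :=
    Subsingleton.elim _ _
  rw [h1]
  congr 2

lemma nd_star {s : Finset (Fin n)} (h0 : (0 : Fin n) ∈ s) (h2 : 2 ≤ s.card) :
    nd (_root_.starGraph n) s = if s.card = 2 then 2 else s.card - 1 := by
  classical
  rw [nd_eq]
  split_ifs with hc
  · rw [Finset.filter_true_of_mem, hc]
    intro v hv
    rw [star_induce_finset_connected_iff]
    have hcard : (s.erase v).card = 1 := by
      rw [Finset.card_erase_of_mem hv, hc]
    exact ⟨Finset.card_pos.mp (by omega), Or.inl hcard⟩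
  · have hc3 : 3 ≤ s.card := by omega
    have key : Finset.filter
        (fun v => ((_root_.starGraph n).induce ((s.erase v : Finset (Fin n)) : Set (Fin n))).Connected) s
        = s.erase 0 := by
      ext v
      simp only [Finset.mem_filter, Finset.mem_erase]
      rw [star_induce_finset_connected_iff]
      constructor
      · rintro ⟨hv, -, h1 | hm⟩
        · rw [Finset.card_erase_of_mem hv] at h1
          refine ⟨?_, hv⟩
          rintro rfl
          omega
        · refine ⟨?_, hv⟩
          rintro rfl
          exact (Finset.notMem_erase _ _) hm
      · rintro ⟨hv0, hv⟩
        have h0e : (0 : Fin n) ∈ s.erase v := Finset.mem_erase.mpr ⟨Ne.symm hv0, h0⟩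
        exact ⟨hv, ⟨0, h0e⟩, Or.inr h0e⟩
    rw [key, Finset.card_erase_of_mem h0]

lemma sum_choose_mul_choose_two (m : ℕ) (hm : 2 ≤ m) :
    ∑ k ∈ Finset.range (m + 1), m.choose k * (Nat.choose k 2 + if k = 1 then 1 else 0)
      = m + 2 ^ (m - 2) * m.choose 2 := by
  have hsplit : ∀ k, m.choose k * (Nat.choose k 2 + if k = 1 then 1 else 0)
      = m.choose k * Nat.choose k 2 + (if k = 1 then m.choose k else 0) := by
    intro k
    rw [Nat.mul_add, mul_ite, Nat.mul_one, Nat.mul_zero]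
  simp only [hsplit]
  rw [Finset.sum_add_distrib, Finset.sum_ite_eq' (Finset.range (m + 1)) 1 (m.choose ·),
    if_pos (Finset.mem_range.mpr (by omega)), Nat.choose_one_right]
  have hm1 : m + 1 = 2 + (m - 1) := by omega
  rw [hm1, Finset.sum_range_add]
  have h01 : ∑ k ∈ Finset.range 2, m.choose k * Nat.choose k 2 = 0 := by
    rw [Finset.sum_range_succ, Finset.sum_range_one]
    norm_num
  rw [h01, Nat.zero_add]
  have hterm : ∀ i ∈ Finset.range (m - 1),
      m.choose (2 + i) * Nat.choose (2 + i) 2 = m.choose 2 * (m - 2).choose i := by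
    intro i hi
    rw [Finset.mem_range] at hi
    have h1 : 2 + i ≤ m := by omega
    have := Nat.choose_mul (n := m) (by omega : 2 ≤ 2 + i)
    simpa using this
  rw [Finset.sum_congr rfl hterm, ← Finset.mul_sum]
  have hrange : m - 1 = (m - 2) + 1 := by omega
  rw [hrange, Nat.sum_range_choose]
  ring

end Aux

open scoped Classical in
/-- For the star graph on `n` vertices (one center and `n−1` leaves),
`Σ_{s tube, |s| ≥ 2} (nd(s) choose 2) = (n−1) + 2^{n−3}·((n−1) choose 2)`. -/
theorem stmt18 (n : ℕ) [NeZero n] (hn : 3 ≤ n) :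
    ∑ s ∈ (Finset.univ : Finset (Finset (Fin n))).filter
        (fun s => 2 ≤ s.card ∧ IsTube (starGraph n) s),
      Nat.choose (nd (starGraph n) s) 2
      = (n - 1) + 2 ^ (n - 3) * Nat.choose (n - 1) 2 := by
  classical
  -- Step 1: tubes of size ≥ 2 are exactly the sets of size ≥ 2 containing 0.
  have hset : ((Finset.univ : Finset (Finset (Fin n))).filter
        (fun s => 2 ≤ s.card ∧ IsTube (starGraph n) s))
      = (Finset.univ : Finset (Finset (Fin n))).filter
        (fun s => 2 ≤ s.card ∧ (0 : Fin n) ∈ s) := by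
    ext s
    simp only [Finset.mem_filter, Finset.mem_univ, true_and]
    simp only [IsTube]
    constructor
    · rintro ⟨h2, -, hconn⟩
      refine ⟨h2, ?_⟩
      rcases (star_induce_finset_connected_iff.mp hconn).2 with h1 | h0
      · omega
      · exact h0
    · rintro ⟨h2, h0⟩
      exact ⟨h2, ⟨0, h0⟩,
        star_induce_finset_connected_iff.mpr ⟨⟨0, h0⟩, Or.inr h0⟩⟩
  rw [hset]
  -- Step 2: rewrite the summand using the value of `nd`.
  have hterm : ∀ s ∈ (Finset.univ : Finset (Finset (Fin n))).filter
        (fun s => 2 ≤ s.card ∧ (0 : Fin n) ∈ s),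
      Nat.choose (nd (starGraph n) s) 2
        = Nat.choose (s.card - 1) 2 + (if s.card - 1 = 1 then 1 else 0) := by
    intro s hs
    simp only [Finset.mem_filter, Finset.mem_univ, true_and] at hs
    rw [nd_star hs.2 hs.1]
    by_cases h : s.card = 2
    · rw [if_pos h, h]
      decide
    · rw [if_neg h, if_neg (show ¬(s.card - 1 = 1) by omega)]
      simp
  rw [Finset.sum_congr rfl hterm]
  -- Step 3: extend to all sets containing 0 (the extra term, `s = {0}`, contributes 0).
  have hext : ∑ s ∈ (Finset.univ : Finset (Finset (Fin n))).filter
        (fun s => 2 ≤ s.card ∧ (0 : Fin n) ∈ s),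
        (Nat.choose (s.card - 1) 2 + (if s.card - 1 = 1 then 1 else 0))
      = ∑ s ∈ (Finset.univ : Finset (Finset (Fin n))).filter
        (fun s => (0 : Fin n) ∈ s),
        (Nat.choose (s.card - 1) 2 + (if s.card - 1 = 1 then 1 else 0)) := by
    refine Finset.sum_subset ?_ ?_
    · intro s hs
      simp only [Finset.mem_filter, Finset.mem_univ, true_and] at hs ⊢
      exact hs.2
    · intro s hs hns
      simp only [Finset.mem_filter, Finset.mem_univ, true_and] at hs hns
      have hlt : ¬(2 ≤ s.card) := fun hh => hns ⟨hh, hs⟩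
      have h1 : s.card = 1 := by
        have := Finset.card_pos.mpr ⟨0, hs⟩
        omega
      simp only [h1]
      decide
  rw [hext]
  -- Step 4: bijection `s ↦ s.erase 0` with the powerset of the leaves.
  have hbij : ∑ s ∈ (Finset.univ : Finset (Finset (Fin n))).filter
        (fun s => (0 : Fin n) ∈ s),
        (Nat.choose (s.card - 1) 2 + (if s.card - 1 = 1 then 1 else 0))
      = ∑ L ∈ ((Finset.univ : Finset (Fin n)).erase 0).powerset,
        (Nat.choose L.card 2 + (if L.card = 1 then 1 else 0)) := by
    refine Finset.sum_nbij' (fun s => s.erase 0) (fun L => insert 0 L) ?_ ?_ ?_ ?_ ?_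
    · intro s hs
      simp only [Finset.mem_filter, Finset.mem_univ, true_and] at hs
      simp only [Finset.mem_powerset]
      intro x hx
      simp only [Finset.mem_erase] at hx ⊢
      exact ⟨hx.1, Finset.mem_univ x⟩
    · intro L hL
      simp only [Finset.mem_filter, Finset.mem_univ, true_and]
      exact Finset.mem_insert_self 0 L
    · intro s hs
      simp only [Finset.mem_filter, Finset.mem_univ, true_and] at hs
      exact Finset.insert_erase hs
    · intro L hL
      simp only [Finset.mem_powerset] at hL
      refine Finset.erase_insert ?_
      intro h0L
      exact (Finset.mem_erase.mp (hL h0L)).1 rfl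
    · intro s hs
      simp only [Finset.mem_filter, Finset.mem_univ, true_and] at hs
      rw [Finset.card_erase_of_mem hs]
  rw [hbij]
  -- Step 5: sum over the powerset via binomial coefficients.
  rw [Finset.sum_powerset_apply_card
    (f := fun k => Nat.choose k 2 + if k = 1 then 1 else 0)]
  have hcardE : ((Finset.univ : Finset (Fin n)).erase 0).card = n - 1 := by
    rw [Finset.card_erase_of_mem (Finset.mem_univ 0), Finset.card_univ, Fintype.card_fin]
  rw [hcardE]
  simp only [smul_eq_mul]
  rw [sum_choose_mul_choose_two (n - 1) (by omega)]
  have : n - 1 - 2 = n - 3 := by omega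
  rw [this]
end
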